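/- arXiv:1608.07667 — 3 statements merged into one kernel-verified Lean document; each statement's English description precedes it below -/
import Mathlib

section
/- Let P be a real skew-symmetric n×n matrix and η ∈ ℝⁿ with P η = 0. If for all x ∈ ℝⁿ, ⟪η,x⟫ • (P.mulVec x) = 0, and η ≠ 0, then P = 0. -/
open Matrix

theorem P_eq_zero_of_skew_conditions {n : ℕ} (P : Matrix (Fin n) (Fin n) ℝ)
    (hP : Pᵀ = -P) (η : Fin n → ℝ)
    (hPη : P.mulVec η = 0) (hη : η ≠ 0)
    (h : ∀ x : Fin n → ℝ, (∑ i, η i * x i) • P.mulVec x = 0) :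
    P = 0 := by
  obtain ⟨i, hi⟩ : ∃ i, η i ≠ 0 := by
    by_contra hc
    push_neg at hc
    exact hη (funext hc)
  have key : ∀ x : Fin n → ℝ, (∑ j, η j * x j) ≠ 0 → P.mulVec x = 0 := by
    intro x hx
    have := h x
    rcases smul_eq_zero.mp this with h1 | h2
    · exact absurd h1 hx
    · exact h2
  have hsingle : ∀ j, (∑ k, η k * (Pi.single j 1 : Fin n → ℝ) k) = η j := by
    intro j
    rw [Finset.sum_eq_single j]
    · simp
    · intro b _ hb; simp [Pi.single_apply, hb]
    · simp
  have hei : P.mulVec (Pi.single i 1) = 0 := by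
    apply key
    rw [hsingle]; exact hi
  have hall : ∀ x : Fin n → ℝ, P.mulVec x = 0 := by
    intro x
    by_cases hx : (∑ j, η j * x j) = 0
    · have h2 : P.mulVec (x + Pi.single i 1) = 0 := by
        apply key
        simp only [Pi.add_apply, mul_add, Finset.sum_add_distrib, hx, hsingle, zero_add]
        exact hi
      have := congrArg (· - P.mulVec (Pi.single i 1)) h2
      simpa [Matrix.mulVec_add, hei] using this
    · exact key x hx
  ext j k
  have := congrFun (hall (Pi.single k 1)) j
  simpa [Matrix.mulVec_single] using this
end

section
/- If V and c·V are both conformal vector fields of flat Euclidean space ℝⁿ (n ≥ 2) with V nowhere zero, where c : ℝⁿ → ℝ is smooth, then c is constant. Concretely: if the symmetric part of the Jacobian of V is pointwise a scalar multiple of the identity, and the same holds for x ↦ c(x)·V(x), and V(x) ≠ 0 for all x, then c is constant. -/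
open scoped RealInnerProductSpace
open Module

private lemma conf_inner {E : Type*} [NormedAddCommGroup E] [InnerProductSpace ℝ E]
    [FiniteDimensional ℝ E] (A : E →L[ℝ] E) (f : ℝ)
    (h : A + ContinuousLinearMap.adjoint A = (2 * f) • ContinuousLinearMap.id ℝ E)
    (u w : E) : ⟪A u, w⟫ + ⟪u, A w⟫ = 2 * f * ⟪u, w⟫ := by
  have h1 := congrArg (fun B : E →L[ℝ] E => ⟪B u, w⟫) h
  simp only [ContinuousLinearMap.add_apply, ContinuousLinearMap.smul_apply,
    ContinuousLinearMap.id_apply, inner_add_left, real_inner_smul_left,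
    ContinuousLinearMap.adjoint_inner_left] at h1
  linarith

theorem conformal_factor_constant {n : ℕ} (hn : 2 ≤ n)
    (V : EuclideanSpace ℝ (Fin n) → EuclideanSpace ℝ (Fin n))
    (c : EuclideanSpace ℝ (Fin n) → ℝ)
    (hV : ContDiff ℝ (⊤ : ℕ∞) V) (hc : ContDiff ℝ (⊤ : ℕ∞) c)
    (hVconf : ∀ x, ∃ f : ℝ, fderiv ℝ V x + ContinuousLinearMap.adjoint (fderiv ℝ V x)
      = (2 * f) • ContinuousLinearMap.id ℝ (EuclideanSpace ℝ (Fin n)))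
    (hcVconf : ∀ x, ∃ g : ℝ,
      fderiv ℝ (fun y => c y • V y) x
          + ContinuousLinearMap.adjoint (fderiv ℝ (fun y => c y • V y) x)
        = (2 * g) • ContinuousLinearMap.id ℝ (EuclideanSpace ℝ (Fin n)))
    (hV0 : ∀ x, V x ≠ 0) :
    ∀ x y, c x = c y := by
  have hVd : Differentiable ℝ V := hV.differentiable (by simp)
  have hcd : Differentiable ℝ c := hc.differentiable (by simp)
  refine is_const_of_fderiv_eq_zero hcd (fun x => ?_)
  obtain ⟨f, hf⟩ := hVconf x
  obtain ⟨g, hg⟩ := hcVconf x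
  set v := V x with hv
  set L := fderiv ℝ c x with hL
  have hA2 : fderiv ℝ (fun y => c y • V y) x
      = c x • fderiv ℝ V x + L.smulRight v := fderiv_smul (hcd x) (hVd x)
  -- bilinear identities
  have key1 := conf_inner (fderiv ℝ V x) f hf
  have key2 := conf_inner _ g hg
  rw [hA2] at key2
  have key : ∀ u w : EuclideanSpace ℝ (Fin n),
      L u * ⟪v, w⟫ + L w * ⟪u, v⟫ = 2 * (g - c x * f) * ⟪u, w⟫ := by
    intro u w
    have h2 := key2 u w
    simp only [ContinuousLinearMap.add_apply, ContinuousLinearMap.smul_apply,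
      ContinuousLinearMap.smulRight_apply, inner_add_left, inner_add_right,
      real_inner_smul_left, real_inner_smul_right] at h2
    have h1 := key1 u w
    linear_combination h2 - c x * h1
  -- find a nonzero vector orthogonal to v
  have hvne : v ≠ 0 := hV0 x
  obtain ⟨w0, hw0mem, hw0ne⟩ : ∃ w0, w0 ∈ (ℝ ∙ v)ᗮ ∧ w0 ≠ 0 := by
    apply Submodule.exists_mem_ne_zero_of_ne_bot
    intro hbot
    have h1 : finrank ℝ (ℝ ∙ v) + finrank ℝ (ℝ ∙ v)ᗮ
        = finrank ℝ (EuclideanSpace ℝ (Fin n)) :=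
      Submodule.finrank_add_finrank_orthogonal _
    rw [hbot, finrank_span_singleton hvne, finrank_euclideanSpace_fin] at h1
    simp at h1
    omega
  have hw0 : ⟪v, w0⟫ = 0 := Submodule.mem_orthogonal_singleton_iff_inner_right.mp hw0mem
  have hw0' : ⟪w0, v⟫ = 0 := by rw [real_inner_comm]; exact hw0
  -- h := g - c x * f is zero
  have hw0n : ⟪w0, w0⟫ ≠ 0 := fun h => hw0ne (inner_self_eq_zero.mp h)
  have hvn : ⟪v, v⟫ ≠ 0 := fun h => hvne (inner_self_eq_zero.mp h)
  have hh0 : g - c x * f = 0 := by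
    have := key w0 w0
    rw [hw0, hw0'] at this
    have h2 : 2 * (g - c x * f) * ⟪w0, w0⟫ = 0 := by linarith
    rcases mul_eq_zero.mp h2 with h3 | h3
    · linarith [mul_eq_zero.mp h3]
    · exact absurd h3 hw0n
  have hLv : L v = 0 := by
    have := key v v
    rw [hh0] at this
    simp at this
    rcases this with h3 | h3
    · exact h3
    · exact absurd h3 hvne
  have hLperp : ∀ w, ⟪v, w⟫ = 0 → L w = 0 := by
    intro w hw
    have := key v w
    rw [hh0, hw] at this
    simp at this
    rcases this with h3 | h3
    · exact h3
    · exact absurd h3 hvne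
  -- conclude L = 0 by orthogonal decomposition
  ext z
  have hproj : z - (Submodule.orthogonalProjectionOnto (ℝ ∙ v) z : EuclideanSpace ℝ (Fin n)) ∈ (ℝ ∙ v)ᗮ :=
    Submodule.sub_starProjection_mem_orthogonal z
  obtain ⟨a, ha⟩ := Submodule.mem_span_singleton.mp
    (Submodule.orthogonalProjectionOnto (ℝ ∙ v) z).2
  have h1 : L (z - (Submodule.orthogonalProjectionOnto (ℝ ∙ v) z : EuclideanSpace ℝ (Fin n))) = 0 :=
    hLperp _ (Submodule.mem_orthogonal_singleton_iff_inner_right.mp hproj)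
  have h2 : L ((Submodule.orthogonalProjectionOnto (ℝ ∙ v) z : EuclideanSpace ℝ (Fin n))) = 0 := by
    rw [← ha, map_smul, hLv, smul_zero]
  have : L z = L (z - (Submodule.orthogonalProjectionOnto (ℝ ∙ v) z : EuclideanSpace ℝ (Fin n)))
      + L ((Submodule.orthogonalProjectionOnto (ℝ ∙ v) z : EuclideanSpace ℝ (Fin n))) := by
    rw [← map_add]; congr 1; abel
  rw [this, h1, h2]
  simp
end

section
/- Every conformal vector field of flat Euclidean ℝⁿ (n ≥ 3) has the form V(x) = -2(λ + ⟪d,x⟫)x + ‖x‖² d + Q x + η, where λ ∈ ℝ, d, η ∈ ℝⁿ are constant and Q is a constant skew-symmetric matrix; moreover its conformal factor is c(x) = λ + ⟪d,x⟫. -/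
open Matrix RealInnerProductSpace

set_option maxHeartbeats 1000000 in
theorem conformal_field_flat_structure {n : ℕ} (hn : 3 ≤ n)
    (V : EuclideanSpace ℝ (Fin n) → EuclideanSpace ℝ (Fin n))
    (c : EuclideanSpace ℝ (Fin n) → ℝ)
    (hV : ContDiff ℝ (⊤ : ℕ∞) V) (hc : ContDiff ℝ (⊤ : ℕ∞) c)
    (hconf : ∀ x, fderiv ℝ V x + ContinuousLinearMap.adjoint (fderiv ℝ V x)
      = (-4 * c x) • ContinuousLinearMap.id ℝ (EuclideanSpace ℝ (Fin n))) :
    ∃ (l : ℝ) (d η : EuclideanSpace ℝ (Fin n)) (Q : Matrix (Fin n) (Fin n) ℝ),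
      Qᵀ = -Q ∧
      (∀ x, V x = (-2 * (l + ⟪d, x⟫)) • x + ‖x‖ ^ 2 • d
        + (EuclideanSpace.equiv (Fin n) ℝ).symm (Q.mulVec (EuclideanSpace.equiv (Fin n) ℝ x)) + η) ∧
      (∀ x, c x = l + ⟪d, x⟫) := by
  set D1 := fderiv ℝ V with hD1def
  set D2 := fderiv ℝ D1 with hD2def
  set D3 := fderiv ℝ D2 with hD3def
  set dc := fderiv ℝ c with hdcdef
  set d2c := fderiv ℝ dc with hd2cdef
  have hD1s : ContDiff ℝ (⊤ : ℕ∞) D1 := hV.fderiv_right (by simp)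
  have hD2s : ContDiff ℝ (⊤ : ℕ∞) D2 := hD1s.fderiv_right (by simp)
  have hdcs : ContDiff ℝ (⊤ : ℕ∞) dc := hc.fderiv_right (by simp)
  have hVat : ∀ x, HasFDerivAt V (D1 x) x := fun x =>
    (hV.differentiable (by simp) x).hasFDerivAt
  have hD1at : ∀ x, HasFDerivAt D1 (D2 x) x := fun x =>
    (hD1s.differentiable (by simp) x).hasFDerivAt
  have hD2at : ∀ x, HasFDerivAt D2 (D3 x) x := fun x =>
    (hD2s.differentiable (by simp) x).hasFDerivAt
  have hcat : ∀ x, HasFDerivAt c (dc x) x := fun x =>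
    (hc.differentiable (by simp) x).hasFDerivAt
  have hdcat : ∀ x, HasFDerivAt dc (d2c x) x := fun x =>
    (hdcs.differentiable (by simp) x).hasFDerivAt
  -- scalar form of the conformal equation
  have hscal : ∀ (x v w : EuclideanSpace ℝ (Fin n)),
      ⟪w, D1 x v⟫ + ⟪v, D1 x w⟫ = -4 * c x * ⟪v, w⟫ := by
    intro x v w
    have h : ⟪w, (D1 x + ContinuousLinearMap.adjoint (D1 x)) v⟫
        = ⟪w, ((-4 * c x) • ContinuousLinearMap.id ℝ (EuclideanSpace ℝ (Fin n))) v⟫ := by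
      rw [hconf x]
    simp only [ContinuousLinearMap.add_apply, inner_add_right,
      ContinuousLinearMap.smul_apply, ContinuousLinearMap.id_apply,
      real_inner_smul_right, ContinuousLinearMap.adjoint_inner_right] at h
    linear_combination h + real_inner_comm ((D1 x) w) v + (4 * c x) * real_inner_comm w v
  -- first differentiated equation
  have hF : ∀ (x u v w : EuclideanSpace ℝ (Fin n)),
      ⟪w, D2 x u v⟫ + ⟪v, D2 x u w⟫ = -4 * dc x u * ⟪v, w⟫ := by
    intro x u v w
    set Φ1 : (EuclideanSpace ℝ (Fin n) →L[ℝ] EuclideanSpace ℝ (Fin n)) →L[ℝ] ℝ :=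
      (innerSL ℝ w).comp (ContinuousLinearMap.apply ℝ (EuclideanSpace ℝ (Fin n)) v) with hΦ1
    set Φ2 : (EuclideanSpace ℝ (Fin n) →L[ℝ] EuclideanSpace ℝ (Fin n)) →L[ℝ] ℝ :=
      (innerSL ℝ v).comp (ContinuousLinearMap.apply ℝ (EuclideanSpace ℝ (Fin n)) w) with hΦ2
    have hf : HasFDerivAt (fun y => ⟪w, D1 y v⟫ + ⟪v, D1 y w⟫)
        (Φ1.comp (D2 x) + Φ2.comp (D2 x)) x :=
      (Φ1.hasFDerivAt.comp x (hD1at x)).add (Φ2.hasFDerivAt.comp x (hD1at x))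
    have hg : HasFDerivAt (fun y => -4 * c y * ⟪v, w⟫)
        (⟪v, w⟫ • ((-4 : ℝ) • dc x)) x := ((hcat x).const_mul (-4)).mul_const ⟪v, w⟫
    have hfg : (fun y => ⟪w, D1 y v⟫ + ⟪v, D1 y w⟫) = (fun y => -4 * c y * ⟪v, w⟫) :=
      funext fun y => hscal y v w
    have hf2 : HasFDerivAt (fun y => -4 * c y * ⟪v, w⟫)
        (Φ1.comp (D2 x) + Φ2.comp (D2 x)) x := hfg ▸ hf
    have heq := hf2.unique hg
    have := congrFun (congrArg DFunLike.coe heq) u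
    simp only [ContinuousLinearMap.add_apply, ContinuousLinearMap.coe_comp',
      Function.comp_apply, ContinuousLinearMap.smul_apply, hΦ1, hΦ2,
      ContinuousLinearMap.apply_apply, innerSL_apply_apply, smul_eq_mul] at this
    rw [this]; ring
  have hS2 : ∀ (x u v : EuclideanSpace ℝ (Fin n)), D2 x u v = D2 x v u := fun x u v =>
    second_derivative_symmetric hVat (hD1at x) u v
  have hS2c : ∀ (x u v : EuclideanSpace ℝ (Fin n)), d2c x u v = d2c x v u := fun x u v =>
    second_derivative_symmetric hcat (hdcat x) u v
  -- Killing-type identity for the second derivative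
  have hKEY : ∀ (x u v w : EuclideanSpace ℝ (Fin n)), ⟪w, D2 x u v⟫ =
      -2 * (dc x u * ⟪v, w⟫ + dc x v * ⟪u, w⟫ - dc x w * ⟪u, v⟫) := by
    intro x u v w
    have e1 := hF x u v w
    have e2 := hF x v u w
    have e3 := hF x w u v
    have s1 : ⟪w, D2 x v u⟫ = ⟪w, D2 x u v⟫ := by rw [hS2 x u v]
    have s2 : ⟪v, D2 x u w⟫ = ⟪v, D2 x w u⟫ := by rw [hS2 x u w]
    have s3 : ⟪u, D2 x v w⟫ = ⟪u, D2 x w v⟫ := by rw [hS2 x v w]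
    linarith
  -- second differentiated equation
  have hF3 : ∀ (x z u v w : EuclideanSpace ℝ (Fin n)), ⟪w, D3 x z u v⟫ =
      -2 * (d2c x z u * ⟪v, w⟫ + d2c x z v * ⟪u, w⟫ - d2c x z w * ⟪u, v⟫) := by
    intro x z u v w
    set Φ : (EuclideanSpace ℝ (Fin n) →L[ℝ] (EuclideanSpace ℝ (Fin n) →L[ℝ] EuclideanSpace ℝ (Fin n))) →L[ℝ] ℝ :=
      (innerSL ℝ w).comp ((ContinuousLinearMap.apply ℝ (EuclideanSpace ℝ (Fin n)) v).comp
        (ContinuousLinearMap.apply ℝ (EuclideanSpace ℝ (Fin n) →L[ℝ] EuclideanSpace ℝ (Fin n)) u)) with hΦ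
    have hf0 := ((hD2at x).clm_apply (hasFDerivAt_const u x)).clm_apply (hasFDerivAt_const v x)
    have hf : HasFDerivAt (fun y => ⟪w, D2 y u v⟫) (Φ.comp (D3 x)) x := by
      refine ((innerSL ℝ w).hasFDerivAt.comp x hf0).congr_fderiv ?_
      ext z
      simp [hΦ]
    have hu : HasFDerivAt (fun y => dc y u)
        ((ContinuousLinearMap.apply ℝ ℝ u).comp (d2c x)) x :=
      (ContinuousLinearMap.apply ℝ ℝ u).hasFDerivAt.comp x (hdcat x)
    have hv : HasFDerivAt (fun y => dc y v)
        ((ContinuousLinearMap.apply ℝ ℝ v).comp (d2c x)) x :=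
      (ContinuousLinearMap.apply ℝ ℝ v).hasFDerivAt.comp x (hdcat x)
    have hw : HasFDerivAt (fun y => dc y w)
        ((ContinuousLinearMap.apply ℝ ℝ w).comp (d2c x)) x :=
      (ContinuousLinearMap.apply ℝ ℝ w).hasFDerivAt.comp x (hdcat x)
    have hg : HasFDerivAt
        (fun y => -2 * (dc y u * ⟪v, w⟫ + dc y v * ⟪u, w⟫ - dc y w * ⟪u, v⟫))
        ((-2 : ℝ) • ((⟪v, w⟫ • ((ContinuousLinearMap.apply ℝ ℝ u).comp (d2c x))
          + ⟪u, w⟫ • ((ContinuousLinearMap.apply ℝ ℝ v).comp (d2c x)))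
          - ⟪u, v⟫ • ((ContinuousLinearMap.apply ℝ ℝ w).comp (d2c x)))) x :=
      (((hu.mul_const ⟪v, w⟫).add (hv.mul_const ⟪u, w⟫)).sub
        (hw.mul_const ⟪u, v⟫)).const_mul (-2)
    have hfg : (fun y => ⟪w, D2 y u v⟫)
        = (fun y => -2 * (dc y u * ⟪v, w⟫ + dc y v * ⟪u, w⟫ - dc y w * ⟪u, v⟫)) :=
      funext fun y => hKEY y u v w
    have hf2 : HasFDerivAt
        (fun y => -2 * (dc y u * ⟪v, w⟫ + dc y v * ⟪u, w⟫ - dc y w * ⟪u, v⟫))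
        (Φ.comp (D3 x)) x := hfg ▸ hf
    have heq := hf2.unique hg
    have := congrFun (congrArg DFunLike.coe heq) z
    simp only [ContinuousLinearMap.coe_comp', Function.comp_apply, hΦ,
      ContinuousLinearMap.apply_apply, innerSL_apply_apply, ContinuousLinearMap.smul_apply,
      ContinuousLinearMap.add_apply, ContinuousLinearMap.sub_apply, smul_eq_mul] at this
    rw [this]; ring
  have hS3 : ∀ (x z u v : EuclideanSpace ℝ (Fin n)), D3 x z u v = D3 x u z v := fun x z u v =>
    congrFun (congrArg _ (second_derivative_symmetric hD1at (hD2at x) z u)) v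
  -- the star identity
  have hstar : ∀ (x z u v w : EuclideanSpace ℝ (Fin n)),
      d2c x z v * ⟪u, w⟫ - d2c x z w * ⟪u, v⟫ =
      d2c x u v * ⟪z, w⟫ - d2c x u w * ⟪z, v⟫ := by
    intro x z u v w
    have h1 := hF3 x z u v w
    have h2 := hF3 x u z v w
    have hsym : ⟪w, D3 x z u v⟫ = ⟪w, D3 x u z v⟫ := by rw [hS3 x z u v]
    have hcz : d2c x z u = d2c x u z := hS2c x z u
    rw [h1, h2, hcz] at hsym
    linarith
  have hdecomp : ∀ x : EuclideanSpace ℝ (Fin n),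
      x = ∑ i, x i • (EuclideanSpace.single i (1:ℝ) : EuclideanSpace ℝ (Fin n)) := by
    intro x
    ext j
    rw [show ((∑ i, x i • (EuclideanSpace.single i (1:ℝ) : EuclideanSpace ℝ (Fin n))) j)
        = ∑ i, (x i • (EuclideanSpace.single i (1:ℝ) : EuclideanSpace ℝ (Fin n))) j
        from by simp only [WithLp.ofLp_sum, Finset.sum_apply]]
    simp [EuclideanSpace.single_apply]
  -- Hessian of c vanishes
  have hhess : ∀ (x z u : EuclideanSpace ℝ (Fin n)), d2c x z u = 0 := by
    intro x z u
    set e : Fin n → EuclideanSpace ℝ (Fin n) := fun i => EuclideanSpace.single i (1:ℝ) with he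
    have hexists : ∀ i j : Fin n, ∃ k, k ≠ i ∧ k ≠ j := by
      intro i j
      by_contra h
      push_neg at h
      have hsub : (Finset.univ : Finset (Fin n)) ⊆ {i, j} := by
        intro k _
        rcases eq_or_ne k i with hk | hk
        · simp [hk]
        · simp [h k hk]
      have hcard := Finset.card_le_card hsub
      have h2 : ({i, j} : Finset (Fin n)).card ≤ 2 :=
        le_trans (Finset.card_insert_le _ _) (by simp)
      simp only [Finset.card_univ, Fintype.card_fin] at hcard
      omega
    have hone : ∀ i : Fin n, ⟪e i, e i⟫ = (1:ℝ) := by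
      intro i; simp [he]
    have hzero : ∀ i j : Fin n, i ≠ j → ⟪e i, e j⟫ = (0:ℝ) := by
      intro i j hij
      simp [he, EuclideanSpace.inner_single_left, EuclideanSpace.single_apply,
        Ne.symm hij]
    have hB0 : ∀ i j, d2c x (e i) (e j) = 0 := by
      intro i j
      by_cases hij : i = j
      · subst hij
        obtain ⟨j, hji, -⟩ := hexists i i
        obtain ⟨k, hki, hkj⟩ := hexists i j
        have h1 := hstar x (e i) (e j) (e i) (e j)
        have h2 := hstar x (e i) (e k) (e i) (e k)
        have h3 := hstar x (e j) (e k) (e j) (e k)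
        simp only [hone i, hone j, hone k, hzero j i hji, hzero i j (Ne.symm hji),
          hzero k i hki, hzero i k (Ne.symm hki), hzero k j hkj, hzero j k (Ne.symm hkj),
          mul_one, mul_zero, sub_zero, zero_sub] at h1 h2 h3
        linarith
      · obtain ⟨k, hki, hkj⟩ := hexists i j
        have h1 := hstar x (e i) (e k) (e j) (e k)
        simp only [hone k, hzero k j hkj, hzero i k (Ne.symm hki), hzero i j hij,
          mul_one, mul_zero, sub_zero, zero_sub] at h1
        linarith
    have hz := hdecomp z
    have hu := hdecomp u
    calc d2c x z u = (d2c x (∑ i, z i • e i)) (∑ j, u j • e j) := by rw [← hz, ← hu]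
      _ = 0 := by
          simp only [_root_.map_sum, _root_.map_smul, ContinuousLinearMap.coe_sum',
            ContinuousLinearMap.coe_smul', Finset.sum_apply, Pi.smul_apply,
            ContinuousLinearMap.smul_apply, smul_eq_mul, hB0, mul_zero,
            Finset.sum_const_zero]
  -- dc is constant
  have hdcconst : ∀ x, dc x = dc 0 := by
    intro x
    exact is_const_of_fderiv_eq_zero (hdcs.differentiable (by simp))
      (fun y => by ext z u; rw [← hd2cdef]; exact hhess y z u) x 0
  set d : EuclideanSpace ℝ (Fin n) := (InnerProductSpace.toDual ℝ _).symm (dc 0) with hddef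
  have hdcd : ∀ (x u : EuclideanSpace ℝ (Fin n)), dc x u = ⟪d, u⟫ := by
    intro x u; rw [hdcconst x, hddef, InnerProductSpace.toDual_symm_apply]
  -- c is affine
  have hcaff : ∀ x, c x = c 0 + ⟪d, x⟫ := by
    intro x
    have hconst : ∀ y : EuclideanSpace ℝ (Fin n), c y - dc 0 y = c 0 - dc 0 0 := by
      intro y
      refine is_const_of_fderiv_eq_zero (𝕜 := ℝ)
        (f := fun y => c y - dc 0 y) ?_ ?_ y 0
      · exact (hc.differentiable (by simp)).sub (dc 0).differentiable
      · intro y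
        have hy : HasFDerivAt (fun y => c y - dc 0 y) (dc y - dc 0) y :=
          (hcat y).sub ((dc 0).hasFDerivAt)
        rw [hy.fderiv, hdcconst y, sub_self]
    have := hconst x
    simp only [map_zero, sub_zero] at this
    have h2 : c x = c 0 + dc 0 x := by linarith
    rw [h2, ← hdcd 0 x]
  -- the constant second derivative
  set Cder : EuclideanSpace ℝ (Fin n) →L[ℝ] (EuclideanSpace ℝ (Fin n) →L[ℝ] EuclideanSpace ℝ (Fin n)) :=
    (((-2 : ℝ) • innerSL ℝ d).smulRight (ContinuousLinearMap.id ℝ _))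
    + ((-2 : ℝ) • (ContinuousLinearMap.smulRightL ℝ _ _ (innerSL ℝ d)))
    + ((2 : ℝ) • (((ContinuousLinearMap.smulRightL ℝ _ _).flip d).comp (innerSL ℝ)))
    with hCderdef
  have hCder_apply : ∀ (z u : EuclideanSpace ℝ (Fin n)), Cder z u =
      (-2 * ⟪d, z⟫) • u + (-2 * ⟪d, u⟫) • z + (2 * ⟪z, u⟫) • d := by
    intro z u
    simp only [hCderdef, ContinuousLinearMap.smulRightL, ContinuousLinearMap.add_apply,
      ContinuousLinearMap.smulRight_apply, ContinuousLinearMap.smul_apply,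
      ContinuousLinearMap.id_apply, ContinuousLinearMap.coe_comp', Function.comp_apply,
      ContinuousLinearMap.flip_apply, ContinuousLinearMap.coe_mk', LinearMap.coe_mk,
      AddHom.coe_mk, innerSL_apply_apply, smul_eq_mul, LinearMap.mkContinuous₂_apply,
      ContinuousLinearMap.coe_smulRightₗ]
    module
  have hD2const : ∀ x, D2 x = Cder := by
    intro x
    refine ContinuousLinearMap.ext fun z => ContinuousLinearMap.ext fun u => ?_
    refine ext_inner_left ℝ fun w => ?_
    rw [hKEY x z u w, hCder_apply z u]
    simp only [inner_add_right, real_inner_smul_right, hdcd]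
    linear_combination (-2 * ⟪d, z⟫) * real_inner_comm w u + (-2 * ⟪d, u⟫) * real_inner_comm w z
      + (2 * ⟪z, u⟫) * real_inner_comm w d
  -- D1 is affine
  set A := D1 0 with hAdef
  have hD1aff : ∀ x, D1 x = A + Cder x := by
    intro x
    have hconst : ∀ y : EuclideanSpace ℝ (Fin n), D1 y - Cder y = D1 0 - Cder 0 := by
      intro y
      refine is_const_of_fderiv_eq_zero (𝕜 := ℝ)
        (f := fun y => D1 y - Cder y) ?_ ?_ y 0
      · exact (hD1s.differentiable (by simp)).sub Cder.differentiable
      · intro y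
        have hy : HasFDerivAt (fun y => D1 y - Cder y) (D2 y - Cder) y :=
          (hD1at y).sub (Cder.hasFDerivAt)
        rw [hy.fderiv, hD2const y]; exact sub_self _
    have := hconst x
    rw [_root_.map_zero, sub_zero] at this
    rw [sub_eq_iff_eq_add] at this
    rw [this]
  -- the explicit quadratic part
  have hPat : ∀ x : EuclideanSpace ℝ (Fin n),
      HasFDerivAt (fun y : EuclideanSpace ℝ (Fin n) => (-2 * ⟪d, y⟫) • y + (‖y‖ ^ 2) • d)
        (Cder x) x := by
    intro x
    have h1 : HasFDerivAt (fun y : EuclideanSpace ℝ (Fin n) => ⟪d, y⟫) (innerSL ℝ d) x :=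
      (innerSL ℝ d).hasFDerivAt
    have hs : HasFDerivAt (fun y : EuclideanSpace ℝ (Fin n) => -2 * ⟪d, y⟫)
        ((-2 : ℝ) • innerSL ℝ d) x := h1.const_mul (-2)
    have hterm1 := hs.smul (hasFDerivAt_id x)
    have hns : HasFDerivAt (fun y : EuclideanSpace ℝ (Fin n) => ‖y‖ ^ 2)
        (2 • (innerSL ℝ x)) x := (hasStrictFDerivAt_norm_sq x).hasFDerivAt
    have hterm2 := hns.smul_const d
    have htot := hterm1.add hterm2
    refine htot.congr_fderiv ?_
    refine ContinuousLinearMap.ext fun u => ?_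
    rw [hCder_apply x u]
    simp only [ContinuousLinearMap.add_apply, ContinuousLinearMap.smul_apply,
      ContinuousLinearMap.smulRight_apply, ContinuousLinearMap.id_apply, innerSL_apply_apply,
      ContinuousLinearMap.coe_id', id_eq, smul_eq_mul]
    rw [real_inner_comm u x]
    module
  -- integrate: V = P + A + const
  have hVform : ∀ x, V x = ((-2 * ⟪d, x⟫) • x + (‖x‖ ^ 2) • d) + A x + V 0 := by
    intro x
    have hat : ∀ y : EuclideanSpace ℝ (Fin n), HasFDerivAt
        (fun y : EuclideanSpace ℝ (Fin n) =>
          V y - ((-2 * ⟪d, y⟫) • y + (‖y‖ ^ 2) • d) - A y)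
        (0 : EuclideanSpace ℝ (Fin n) →L[ℝ] EuclideanSpace ℝ (Fin n)) y := by
      intro y
      have h := ((hVat y).sub (hPat y)).sub (A.hasFDerivAt)
      refine h.congr_fderiv ?_
      rw [hD1aff y]
      abel
    have hconst : ∀ y : EuclideanSpace ℝ (Fin n),
        (V y - ((-2 * ⟪d, y⟫) • y + (‖y‖ ^ 2) • d) - A y)
        = (V 0 - ((-2 * ⟪d, (0:EuclideanSpace ℝ (Fin n))⟫) • (0:EuclideanSpace ℝ (Fin n))
            + (‖(0:EuclideanSpace ℝ (Fin n))‖ ^ 2) • d) - A 0) := by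
      intro y
      exact is_const_of_fderiv_eq_zero (𝕜 := ℝ)
        (fun z => (hat z).differentiableAt) (fun z => (hat z).fderiv) y 0
    have h := hconst x
    simp only [inner_zero_right, norm_zero, mul_zero, zero_smul, smul_zero, ne_eq,
      zero_pow, zero_add, add_zero, map_zero, sub_zero] at h
    have h2 : V x - ((-2 * ⟪d, x⟫) • x + (‖x‖ ^ 2) • d) - A x = V 0 := by
      rw [h]
      simp
    calc V x = (V x - ((-2 * ⟪d, x⟫) • x + (‖x‖ ^ 2) • d) - A x)
        + ((-2 * ⟪d, x⟫) • x + (‖x‖ ^ 2) • d) + A x := by abel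
      _ = ((-2 * ⟪d, x⟫) • x + (‖x‖ ^ 2) • d) + A x + V 0 := by rw [h2]; abel
  -- skew part
  set S : EuclideanSpace ℝ (Fin n) →L[ℝ] EuclideanSpace ℝ (Fin n) :=
    A + (2 * c 0) • ContinuousLinearMap.id ℝ _ with hSdef
  have hSadj : ContinuousLinearMap.adjoint S = -S := by
    have h0 := hconf 0
    have hA : ContinuousLinearMap.adjoint A
        = (-4 * c 0) • ContinuousLinearMap.id ℝ (EuclideanSpace ℝ (Fin n)) - A :=
      eq_sub_of_add_eq' h0
    rw [hSdef, map_add, hA]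
    have hid : ContinuousLinearMap.adjoint
        ((2 * c 0) • ContinuousLinearMap.id ℝ (EuclideanSpace ℝ (Fin n)))
        = (2 * c 0) • ContinuousLinearMap.id ℝ (EuclideanSpace ℝ (Fin n)) := by
      rw [map_smulₛₗ]
      simp [ContinuousLinearMap.adjoint_id]
    rw [hid]
    module
  have hAS : ∀ x : EuclideanSpace ℝ (Fin n), A x = S x - (2 * c 0) • x := by
    intro x
    rw [hSdef]
    simp only [ContinuousLinearMap.add_apply, ContinuousLinearMap.smul_apply,
      ContinuousLinearMap.id_apply]
    module
  -- the matrix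
  set Q : Matrix (Fin n) (Fin n) ℝ :=
    Matrix.of (fun i j => S (EuclideanSpace.single j 1) i) with hQdef
  have hQmul : ∀ x : EuclideanSpace ℝ (Fin n),
      (EuclideanSpace.equiv (Fin n) ℝ).symm (Q.mulVec (EuclideanSpace.equiv (Fin n) ℝ x)) = S x := by
    intro x
    ext i
    have hL : ((EuclideanSpace.equiv (Fin n) ℝ).symm
        (Q.mulVec (EuclideanSpace.equiv (Fin n) ℝ x))) i
        = ∑ j, Q i j * x j := rfl
    rw [hL]
    have hR : S x = ∑ j, x j • S (EuclideanSpace.single j (1:ℝ)) := by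
      conv_lhs => rw [hdecomp x]
      rw [_root_.map_sum]
      exact Finset.sum_congr rfl fun j _ => by rw [_root_.map_smul]
    rw [hR]
    rw [show ((∑ j, x j • S (EuclideanSpace.single j (1:ℝ))) i)
        = ∑ j, (x j • S (EuclideanSpace.single j (1:ℝ))) i from by simp only [WithLp.ofLp_sum, Finset.sum_apply]]
    refine Finset.sum_congr rfl fun j _ => ?_
    simp only [hQdef, Matrix.of_apply, PiLp.smul_apply, smul_eq_mul]
    ring
  have hQskew : Qᵀ = -Q := by
    ext i j
    simp only [Matrix.transpose_apply, Matrix.neg_apply, hQdef, Matrix.of_apply]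
    have h1 : S (EuclideanSpace.single i (1:ℝ)) j
        = ⟪S (EuclideanSpace.single i (1:ℝ)), EuclideanSpace.single j (1:ℝ)⟫ := by simp [EuclideanSpace.inner_single_right]
    have h2 : ⟪S (EuclideanSpace.single i (1:ℝ)), EuclideanSpace.single j (1:ℝ)⟫
        = ⟪EuclideanSpace.single i (1:ℝ),
            ContinuousLinearMap.adjoint S (EuclideanSpace.single j (1:ℝ))⟫ :=
      (ContinuousLinearMap.adjoint_inner_right S _ _).symm
    rw [h1, h2, hSadj]
    simp [EuclideanSpace.inner_single_left]
  refine ⟨c 0, d, V 0, Q, hQskew, ?_, ?_⟩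
  · intro x
    rw [hVform x, hQmul x, hAS x]
    module
  · intro x; exact hcaff x
end
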